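/- Let ℓ and p be distinct primes. If p ≡ 1 (mod 4) and the Legendre symbol (ℓ/p) = 1, then p is ℓ-Genocchi irregular. -/

import Mathlib

/-- The `ℓ`-Genocchi number `G_{2n} = ℓ(1 - ℓ^{2n})B_{2n}` (an integer). -/
noncomputable def Gnum (ℓ : ℕ) (n : ℕ) : ℚ :=
  (ℓ : ℚ) * (1 - (ℓ : ℚ) ^ (2 * n)) * bernoulli (2 * n)

/-- An odd prime `p` is `ℓ`-Genocchi irregular if `p` divides one of
`G_2, G_4, …, G_{p-3}`, i.e. `ν_p(G_{2k}) ≥ 1` for some `1 ≤ k ≤ (p-3)/2`. -/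
noncomputable def GenocchiIrregular (ℓ : ℕ) (p : ℕ) : Prop :=
  ∃ k : ℕ, 1 ≤ k ∧ k ≤ (p - 3) / 2 ∧ 1 ≤ padicValRat p (Gnum ℓ k)

/-!
Take `k = (p - 1)/4`, so that `2k = (p - 1)/2`. Euler's criterion turns `(ℓ/p) = 1` into
`ℓ^{2k} ≡ 1 (mod p)`, so `p ∣ 1 - ℓ^{2k}`; since `p - 1 ∤ 2k`, von Staudt–Clausen shows that
`B_{2k}` is `p`-integral, and it is nonzero because `ζ(2k) ≠ 0`. Hence `p ∣ G_{2k}`.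
-/

theorem bernoulli_two_mul_ne_zero {k : ℕ} (hk : k ≠ 0) : bernoulli (2 * k) ≠ 0 := by
  intro h
  have hs := hasSum_zeta_nat hk
  simp only [h, Rat.cast_zero, mul_zero, zero_div] at hs
  have h1 : (fun n : ℕ => 1 / (n : ℝ) ^ (2 * k)) 1 ≤ 0 :=
    hs.tsum_eq ▸ hs.summable.le_tsum 1 fun j _ => by positivity
  norm_num at h1

theorem padicNorm_bernoulli_two_mul_le_one {p k : ℕ} [Fact p.Prime] (h : ¬(p - 1) ∣ 2 * k) :
    padicNorm p (bernoulli (2 * k)) ≤ 1 := by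
  obtain ⟨n, hn⟩ := Bernoulli.vonStaudt_clausen k
  rw [eq_sub_of_add_eq hn.symm]
  refine padicNorm.sub.trans
    (max_le (padicNorm.of_int n) (padicNorm.sum_le' (fun q hq => ?_) zero_le_one))
  obtain ⟨hq, hqk⟩ := (Finset.mem_filter.mp hq).2
  have hqp : ¬p ∣ q := fun hpq => h <| by
    rwa [(Nat.prime_dvd_prime_iff_eq Fact.out hq).mp hpq]
  rw [padicNorm.div, padicNorm.one, (padicNorm.nat_eq_one_iff q).mpr hqp, div_one]

theorem padicNorm_le_zpow_iff {p : ℕ} [Fact p.Prime] {q : ℚ} (hq : q ≠ 0) (n : ℤ) :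
    padicNorm p q ≤ (p : ℚ) ^ (-n) ↔ n ≤ padicValRat p q := by
  rw [padicNorm.eq_zpow_of_nonzero hq, zpow_le_zpow_iff_right₀ (by exact_mod_cast
    (Fact.out : p.Prime).one_lt), neg_le_neg_iff]

theorem legendreSym.pow_div_two_modEq_one {p : ℕ} [Fact p.Prime] {a : ℤ}
    (h : legendreSym p a = 1) : a ^ (p / 2) ≡ 1 [ZMOD p] := by
  rw [← ZMod.intCast_eq_intCast_iff]
  push_cast
  rw [← legendreSym.eq_pow, h, Int.cast_one]

theorem gnum_ne_zero {ℓ k : ℕ} (hℓ : 1 < ℓ) (hk : k ≠ 0) : Gnum ℓ k ≠ 0 := by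
  have hpow : (1 : ℚ) < (ℓ : ℚ) ^ (2 * k) := one_lt_pow₀ (by exact_mod_cast hℓ) (by omega)
  refine mul_ne_zero (mul_ne_zero (by positivity) ?_) (bernoulli_two_mul_ne_zero hk)
  linarith

theorem one_le_padicValRat_gnum {ℓ p k : ℕ} [Fact p.Prime] (hℓ : 1 < ℓ)
    (hmod : (ℓ : ℤ) ^ (2 * k) ≡ 1 [ZMOD p]) (hk : ¬(p - 1) ∣ 2 * k) :
    1 ≤ padicValRat p (Gnum ℓ k) := by
  have hk0 : k ≠ 0 := by rintro rfl; exact hk (dvd_zero _)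
  rw [← padicNorm_le_zpow_iff (gnum_ne_zero hℓ hk0)]
  have hfactor : padicNorm p (1 - (ℓ : ℚ) ^ (2 * k)) ≤ (p : ℚ) ^ (-1 : ℤ) := by
    simpa using (padicNorm.dvd_iff_norm_le (p := p) (n := 1) (z := 1 - (ℓ : ℤ) ^ (2 * k))).mp
      (by simpa using hmod.dvd)
  calc padicNorm p (Gnum ℓ k)
      = padicNorm p ℓ * padicNorm p (1 - (ℓ : ℚ) ^ (2 * k)) *
          padicNorm p (bernoulli (2 * k)) := by
        simp only [Gnum, padicNorm.mul]
    _ ≤ 1 * (p : ℚ) ^ (-1 : ℤ) * 1 :=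
        mul_le_mul (mul_le_mul (padicNorm.of_nat ℓ) hfactor (padicNorm.nonneg _) zero_le_one)
          (padicNorm_bernoulli_two_mul_le_one hk) (padicNorm.nonneg _) (by positivity)
    _ = (p : ℚ) ^ (-1 : ℤ) := by ring

theorem genocchiIrregular_of_one_mod_four_general (ℓ p : ℕ) (hℓ : ℓ.Prime)
    [hp : Fact p.Prime] (h4 : p % 4 = 1)
    (hleg : legendreSym p ℓ = 1) :
    GenocchiIrregular ℓ p := by
  have hp5 : 5 ≤ p := by have := hp.out.two_le; omega
  have h2k : 2 * (p / 4) = p / 2 := by omega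
  refine ⟨p / 4, by omega, by omega, one_le_padicValRat_gnum hℓ.one_lt ?_ ?_⟩
  · rw [h2k]
    exact legendreSym.pow_div_two_modEq_one hleg
  · exact Nat.not_dvd_of_pos_of_lt (by omega) (by omega)

/-- Let `ℓ` and `p` be distinct primes. If `p ≡ 1 (mod 4)` and the Legendre
symbol `(ℓ/p)` equals `1`, then `p` is `ℓ`-Genocchi irregular. -/
theorem genocchiIrregular_of_one_mod_four (ℓ p : ℕ) (hℓ : ℓ.Prime)
    [hp : Fact p.Prime] (hne : ℓ ≠ p) (h4 : p % 4 = 1)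
    (hleg : legendreSym p ℓ = 1) :
    GenocchiIrregular ℓ p :=
  genocchiIrregular_of_one_mod_four_general ℓ p hℓ (hp := hp) h4 hleg
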